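/- arXiv:2402.00862 — 3 statements merged into one kernel-verified Lean document; each statement's English description precedes it below -/
import Mathlib

section
/- Let K be a field, G a finite group, and V a nonzero finite-dimensional K-vector space equipped with a faithful linear representation ρ of G. Then for every natural number d there exist a finite-dimensional K-vector space W and a faithful linear representation σ of G on W such that for every element g ≠ 1 of G and every scalar μ ∈ K, the eigenspace of σ(g) for μ has K-dimension at most dim_K W − d. -/
/-!
Adjoin a trivial summand `K` to the faithful representation `V`. In `V × K` every eigenspace of
every `g ≠ 1` is proper: for `μ = 1` faithfulness makes the fixed space of `g` in `V` proper, and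
for `μ ≠ 1` the summand `K` contributes nothing. Eigenspaces of a direct sum are the products of
the eigenspaces, so codimensions add, and `V × (V × K)^d` does the job.
-/

open Module

section

variable {K : Type*} [Field K] {A B : Type*} [AddCommGroup A] [Module K A]
  [AddCommGroup B] [Module K B]

theorem Submodule.finrank_prod [FiniteDimensional K A] [FiniteDimensional K B]
    (p : Submodule K A) (q : Submodule K B) :
    finrank K (p.prod q) = finrank K p + finrank K q := by
  have hrange : p.prod q = LinearMap.range (p.subtype.prodMap q.subtype) := by
    rw [LinearMap.range_eq_map, ← Submodule.prod_top, LinearMap.prodMap_map_prod,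
      Submodule.map_subtype_top, Submodule.map_subtype_top]
  rw [hrange, LinearMap.finrank_range_of_inj
    (Function.Injective.prodMap p.injective_subtype q.injective_subtype), Module.finrank_prod]

theorem Module.End.eigenspace_prodMap (f : End K A) (g : End K B) (μ : K) :
    eigenspace (f.prodMap g) μ = (eigenspace f μ).prod (eigenspace g μ) := by
  simp only [eigenspace_def, ← LinearMap.ker_prodMap]
  rfl

theorem Module.End.eigenspace_one_of_ne {μ : K} (hμ : μ ≠ 1) :
    eigenspace (1 : End K A) μ = ⊥ := by
  rw [eq_bot_iff]
  intro x hx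
  rw [mem_eigenspace_iff, one_apply] at hx
  have : (1 - μ) • x = 0 := by rw [sub_smul, one_smul, ← hx, sub_self]
  exact (smul_eq_zero.mp this).resolve_left (sub_ne_zero.mpr hμ.symm)

end

namespace Representation

variable {K G : Type*} [Field K] [Monoid G] {A B : Type*} [AddCommGroup A] [Module K A]
  [AddCommGroup B] [Module K B]

theorem prod_injective_left {ρ : Representation K G A} (hρ : Function.Injective ρ)
    (τ : Representation K G B) : Function.Injective (ρ.prod τ) := fun g h hgh =>
  hρ <| LinearMap.ext fun a => by
    simpa using congrArg Prod.fst (LinearMap.congr_fun hgh (a, 0))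

theorem finrank_eigenspace_prod [FiniteDimensional K A] [FiniteDimensional K B]
    (ρ : Representation K G A) (τ : Representation K G B) (g : G) (μ : K) :
    finrank K (End.eigenspace (ρ.prod τ g) μ) =
      finrank K (End.eigenspace (ρ g) μ) + finrank K (End.eigenspace (τ g) μ) := by
  rw [show ρ.prod τ g = (ρ g).prodMap (τ g) from rfl, End.eigenspace_prodMap,
    Submodule.finrank_prod]

def EigenspacesHaveCodimAtLeast (ρ : Representation K G A) (n : ℕ) : Prop :=
  ∀ g : G, g ≠ 1 → ∀ μ : K, finrank K (End.eigenspace (ρ g) μ) + n ≤ finrank K A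

theorem eigenspacesHaveCodimAtLeast_zero [FiniteDimensional K A] (ρ : Representation K G A) :
    ρ.EigenspacesHaveCodimAtLeast 0 := fun _ _ _ => Submodule.finrank_le _

theorem EigenspacesHaveCodimAtLeast.prod [FiniteDimensional K A] [FiniteDimensional K B]
    {ρ : Representation K G A} {τ : Representation K G B} {m n : ℕ}
    (hρ : ρ.EigenspacesHaveCodimAtLeast m) (hτ : τ.EigenspacesHaveCodimAtLeast n) :
    (ρ.prod τ).EigenspacesHaveCodimAtLeast (m + n) := by
  intro g hg μ
  have := hρ g hg μ
  have := hτ g hg μ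
  rw [finrank_eigenspace_prod, finrank_prod]
  omega

theorem eigenspacesHaveCodimAtLeast_one_prod_trivial [FiniteDimensional K A]
    {ρ : Representation K G A} (hρ : Function.Injective ρ) :
    (ρ.prod (trivial K G K)).EigenspacesHaveCodimAtLeast 1 := by
  intro g hg μ
  rw [finrank_eigenspace_prod, finrank_prod, finrank_self]
  rcases eq_or_ne μ 1 with rfl | hμ
  · have hproper : End.eigenspace (ρ g) 1 ≠ ⊤ := fun htop => hg <| hρ <| by
      rw [End.eigenspace_def, one_smul, LinearMap.ker_eq_top, sub_eq_zero] at htop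
      rw [htop, map_one]
    have := Submodule.finrank_lt hproper
    have := Submodule.finrank_le (End.eigenspace (trivial K G K g) 1)
    rw [finrank_self] at this
    omega
  · have := Submodule.finrank_le (End.eigenspace (ρ g) μ)
    rw [show trivial K G K g = 1 from rfl, End.eigenspace_one_of_ne hμ, finrank_bot]
    omega

end Representation

open Representation in
theorem exists_faithful_rep_with_small_eigenspaces_general
    (K : Type) [Field K] (G : Type) [Group G]
    (V : Type) [AddCommGroup V] [Module K V] [FiniteDimensional K V]
    (ρ : Representation K G V) (hρ : Function.Injective ρ) (d : ℕ) :
    ∃ (W : Type) (_ : AddCommGroup W) (_ : Module K W),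
      FiniteDimensional K W ∧
      ∃ σ : Representation K G W, Function.Injective σ ∧
        ∀ g : G, g ≠ 1 → ∀ μ : K,
          Module.finrank K (Module.End.eigenspace (σ g) μ) + d ≤ Module.finrank K W := by
  induction d with
  | zero => exact ⟨V, _, _, ‹_›, ρ, hρ, ρ.eigenspacesHaveCodimAtLeast_zero⟩
  | succ d ih =>
    obtain ⟨W, _, _, _, σ, hσ, hW : σ.EigenspacesHaveCodimAtLeast d⟩ := ih
    exact ⟨W × (V × K), _, _, inferInstance, σ.prod (ρ.prod (trivial K G K)),
      prod_injective_left hσ _, hW.prod (eigenspacesHaveCodimAtLeast_one_prod_trivial hρ)⟩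

/-- **Polynomial tensorial constructions with small eigenspaces**
(linear-algebra form of Proposition 3.8).

Let `K` be a field, `G` a finite group, and `V` a nonzero finite-dimensional
`K`-vector space with a faithful representation `ρ` of `G`.  Then for every
`d : ℕ` there is a finite-dimensional `K`-vector space `W` with a faithful
representation `σ` of `G` such that for every `g ≠ 1` and every scalar `μ`,
the eigenspace of `σ g` for `μ` has codimension at least `d` in `W`. -/
theorem exists_faithful_rep_with_small_eigenspaces
    (K : Type) [Field K] (G : Type) [Group G] [Finite G]
    (V : Type) [AddCommGroup V] [Module K V] [FiniteDimensional K V] [Nontrivial V]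
    (ρ : Representation K G V) (hρ : Function.Injective ρ) (d : ℕ) :
    ∃ (W : Type) (_ : AddCommGroup W) (_ : Module K W),
      FiniteDimensional K W ∧
      ∃ σ : Representation K G W, Function.Injective σ ∧
        ∀ g : G, g ≠ 1 → ∀ μ : K,
          Module.finrank K (Module.End.eigenspace (σ g) μ) + d ≤ Module.finrank K W :=
  exists_faithful_rep_with_small_eigenspaces_general K G V ρ hρ d
end

section
/- Let K be a field, G a finite group, and V a nonzero finite-dimensional K-vector space equipped with a faithful linear representation ρ of G. Then there exist a finite-dimensional K-vector space W and a faithful linear representation σ of G on W such that no nontrivial element of G acts on W by a scalar, i.e. for every g ≠ 1 in G and every c ∈ K one has σ(g) ≠ c·id_W. -/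
/-! Add a trivial one-dimensional summand: `ρ ⊕ 1` stays faithful, and a scalar by which `g` acts
on it must be `1` (look at the trivial summand), so `ρ g = 1`. -/

namespace Representation

variable {k G V W : Type*} [Monoid G] [AddCommMonoid V] [AddCommMonoid W]

theorem prod_injective_of_injective_left [Semiring k] [Module k V] [Module k W]
    (ρV : Representation k G V) (ρW : Representation k G W)
    (hρV : Function.Injective ρV) : Function.Injective (ρV.prod ρW) := by
  intro g₁ g₂ h
  apply hρV
  ext v
  simpa using congr_arg Prod.fst (LinearMap.congr_fun h (v, 0))

theorem eq_one_of_prod_trivial_eq_smul_id [CommSemiring k] [Module k V]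
    (ρ : Representation k G V) {g : G} {c : k}
    (h : (ρ.prod (trivial k G k)) g = c • (LinearMap.id : V × k →ₗ[k] V × k)) : ρ g = 1 := by
  have hc : c = 1 := by
    simpa using (congr_arg Prod.snd (LinearMap.congr_fun h (0, 1))).symm
  ext v
  simpa [hc] using congr_arg Prod.fst (LinearMap.congr_fun h (v, 0))

end Representation

theorem exists_faithful_rep_no_scalar_action_general
    (K : Type) [Field K] (G : Type) [Group G]
    (V : Type) [AddCommGroup V] [Module K V] [FiniteDimensional K V]
    (ρ : Representation K G V) (hρ : Function.Injective ρ) :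
    ∃ (W : Type) (_ : AddCommGroup W) (_ : Module K W),
      FiniteDimensional K W ∧
      ∃ σ : Representation K G W, Function.Injective σ ∧
        ∀ g : G, g ≠ 1 → ∀ c : K, σ g ≠ c • (LinearMap.id : W →ₗ[K] W) := by
  refine ⟨V × K, inferInstance, inferInstance, inferInstance, ρ.prod (.trivial K G K),
    ρ.prod_injective_of_injective_left _ hρ, fun g hg c hc => hg (hρ ?_)⟩
  rw [map_one]
  exact ρ.eq_one_of_prod_trivial_eq_smul_id hc

/-- **First reduction step in Proposition 3.8.**

Let `K` be a field, `G` a finite group, and `V` a nonzero finite-dimensional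
`K`-vector space with a faithful representation `ρ` of `G`.  Then there is a
finite-dimensional `K`-vector space `W` with a faithful representation `σ` of
`G` such that no nontrivial element of `G` acts on `W` by a scalar. -/
theorem exists_faithful_rep_no_scalar_action
    (K : Type) [Field K] (G : Type) [Group G] [Finite G]
    (V : Type) [AddCommGroup V] [Module K V] [FiniteDimensional K V] [Nontrivial V]
    (ρ : Representation K G V) (hρ : Function.Injective ρ) :
    ∃ (W : Type) (_ : AddCommGroup W) (_ : Module K W),
      FiniteDimensional K W ∧
      ∃ σ : Representation K G W, Function.Injective σ ∧
        ∀ g : G, g ≠ 1 → ∀ c : K, σ g ≠ c • (LinearMap.id : W →ₗ[K] W) :=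
  exists_faithful_rep_no_scalar_action_general K G V ρ hρ
end

section
/- Let F ⊆ L ⊆ M be a tower of fields with M finite-dimensional over F. Assume that the degree [L : F] is a prime number, that M is a Galois extension of L, and that M is not a Galois extension of F. Then every F-algebra automorphism of M fixes L pointwise; equivalently, the fixed field of the group Aut_F(M) of all F-algebra automorphisms of M equals L, and Aut_F(M) coincides with Gal(M/L). -/
/-!
Since `M/L` is Galois, anything fixed by `Aut_F(M) ⊇ Gal(M/L)` already lies in `L`, so the fixed
field `K` of `Aut_F(M)` sits between `F` and `L`. As `[L : F]` is prime, `K = F` or `K = L`; the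
first case would make `M/F` Galois by Artin's theorem.
-/

open IntermediateField Module

theorem IntermediateField.eq_bot_or_eq_of_le_of_finrank_prime {F M : Type*} [Field F] [Field M]
    [Algebra F M] {K E : IntermediateField F M} (hle : K ≤ E) (hprime : (finrank F E).Prime) :
    K = ⊥ ∨ K = E := by
  have hdvd : finrank F K ∣ finrank F E := ⟨_, (finrank_bot_mul_relfinrank hle).symm⟩
  have : FiniteDimensional F E := Module.finite_of_finrank_pos hprime.pos
  refine (hprime.eq_one_or_self_of_dvd _ hdvd).imp finrank_eq_one_iff.mp fun h => ?_
  exact eq_of_le_of_finrank_eq hle h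

section Tower

variable (F L M : Type*) [Field F] [Field L] [Field M] [Algebra F L] [Algebra L M] [Algebra F M]
  [IsScalarTower F L M]

theorem finrank_toAlgHom_fieldRange :
    finrank F (IsScalarTower.toAlgHom F L M).fieldRange = finrank F L :=
  (AlgEquiv.ofInjectiveField (IsScalarTower.toAlgHom F L M)).toLinearEquiv.finrank_eq.symm

theorem fixedField_top_le_toAlgHom_fieldRange [IsGalois L M] :
    fixedField (⊤ : Subgroup (M ≃ₐ[F] M)) ≤ (IsScalarTower.toAlgHom F L M).fieldRange := by
  intro x hx
  rw [← SetLike.mem_coe, IsScalarTower.toAlgHom_fieldRange]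
  exact (InfiniteGalois.mem_range_algebraMap_iff_fixed x).2 fun σ =>
    hx ⟨σ.restrictScalars F, Subgroup.mem_top _⟩

end Tower

/-- **Galois-theoretic core of Lemma 4.43.**

Let `F ⊆ L ⊆ M` be a tower of fields with `M` finite over `F`, `[L : F]`
prime, `M/L` Galois and `M/F` not Galois.  Then every `F`-algebra
automorphism of `M` fixes `L` pointwise; equivalently, the fixed field of
`Aut_F(M)` is `L` (so that `Aut_F(M) = Gal(M/L)`). -/
theorem autFixesMiddle_of_primeDegree_of_galois_top
    (F L M : Type) [Field F] [Field L] [Field M]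
    [Algebra F L] [Algebra L M] [Algebra F M] [IsScalarTower F L M]
    [FiniteDimensional F M]
    (hprime : Nat.Prime (Module.finrank F L))
    [IsGalois L M] (hnotGalois : ¬ IsGalois F M) :
    (∀ (σ : M ≃ₐ[F] M) (x : L), σ (algebraMap L M x) = algebraMap L M x) ∧
    IntermediateField.fixedField (⊤ : Subgroup (M ≃ₐ[F] M)) =
      (IsScalarTower.toAlgHom F L M).fieldRange := by
  have hfix : fixedField (⊤ : Subgroup (M ≃ₐ[F] M)) = (IsScalarTower.toAlgHom F L M).fieldRange :=
    (eq_bot_or_eq_of_le_of_finrank_prime (fixedField_top_le_toAlgHom_fieldRange F L M)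
      (finrank_toAlgHom_fieldRange F L M ▸ hprime)).resolve_left
      fun hbot => hnotGalois (IsGalois.of_fixedField_eq_bot F M hbot)
  refine ⟨fun σ x => ?_, hfix⟩
  have hx : algebraMap L M x ∈ fixedField (⊤ : Subgroup (M ≃ₐ[F] M)) := hfix ▸ ⟨x, rfl⟩
  exact hx ⟨σ, Subgroup.mem_top σ⟩
end
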